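/- arXiv:1403.5399 — 4 statements merged into one kernel-verified Lean document; each statement's English description precedes it below -/
import Mathlib

section
/- Let u > 0 and ε ∈ (0, u). Let ζ : [0,∞) → ℝ be right-continuous with left limits with ζ(0) ≥ 0, let η be RCLL, nondecreasing with η(0) ≥ 0, and let β be RCLL with −ε² ≤ ∫₀ᵗ β(s) ds ≤ ε² for all t ∈ [0,u]. Suppose α := ζ + η + β satisfies α(t) ≥ 0 for all t ∈ [0,u]. Then for all t ∈ [0,u], α(t) ≥ Γ[ζ](t) + β(t) − w̄_u(ζ, ε) − 3ε, where Γ[ζ](t) = ζ(t) + sup_{s ≤ t} (ζ(s))⁻ is the one-dimensional Skorohod map and w̄_u(ζ, ε) = sup{|ζ(s) − ζ(t)| : s,t ∈ [0,u], |s−t| ≤ ε} is the modulus of continuity. -/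
/-! For `s ≥ ε`, average `α = ζ + η + β ≥ 0` over `[s - ε, s]`: there `ζ ≤ ζ s + w̄_u(ζ, ε)`
and `η ≤ η s`, while `∫ β` over the window, a difference of two values in `[-ε², ε²]`, is at least
`-2ε²`; hence `-ζ s ≤ η s + w̄_u(ζ, ε) + 2ε`. For `s < ε` the same bound follows from
`ζ 0 ≥ 0` and `|ζ s - ζ 0| ≤ w̄_u(ζ, ε)`. As `η` is nondecreasing and nonnegative, it bounds
`sup_{s ≤ t} (ζ s)⁻` with `η t` in place of `η s`. -/

/-- One-dimensional Skorohod map: `Γ[ζ](t) = ζ(t) + sup_{0 ≤ s ≤ t} (ζ(s))⁻`. -/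
noncomputable def skorohod (ζ : ℝ → ℝ) (t : ℝ) : ℝ :=
  ζ t + sSup ((fun s => max (-(ζ s)) 0) '' Set.Icc 0 t)

/-- Modulus of continuity of `ζ` over `[0,u]` at scale `δ`. -/
noncomputable def modCont (ζ : ℝ → ℝ) (u δ : ℝ) : ℝ :=
  sSup {y | ∃ s t, s ∈ Set.Icc 0 u ∧ t ∈ Set.Icc 0 u ∧ |s - t| ≤ δ ∧ y = |ζ s - ζ t|}

/-- Right continuous with left limits. -/
def RCLL (f : ℝ → ℝ) : Prop :=
  (∀ t : ℝ, ContinuousWithinAt f (Set.Ici t) t) ∧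
  (∀ t : ℝ, ∃ l : ℝ, Filter.Tendsto f (nhdsWithin t (Set.Iio t)) (nhds l))

open Set Filter Topology MeasureTheory

lemma RCLL.exists_abs_le_on_Icc {f : ℝ → ℝ} (hf : RCLL f) (a b : ℝ) :
    ∃ M, ∀ x ∈ Icc a b, |f x| ≤ M := by
  refine isCompact_Icc.induction_on (p := fun s => ∃ M, ∀ x ∈ s, |f x| ≤ M) ⟨0, by simp⟩
    (fun s t hst ⟨M, hM⟩ => ⟨M, fun x hx => hM x (hst hx)⟩)
    (fun s t ⟨M, hM⟩ ⟨N, hN⟩ => ⟨max M N, fun x hx => hx.elim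
      (fun h => (hM x h).trans (le_max_left _ _)) (fun h => (hN x h).trans (le_max_right _ _))⟩)
    ?_
  intro x _
  obtain ⟨l, hl⟩ := hf.2 x
  have hleft : ∀ᶠ y in 𝓝[<] x, |f y| < |f x| + |l| + 1 :=
    hl.abs.eventually_lt_const (by linarith [abs_nonneg (f x)])
  have hright : ∀ᶠ y in 𝓝[≥] x, |f y| < |f x| + |l| + 1 :=
    (hf.1 x).abs.eventually_lt_const (by linarith [abs_nonneg l])
  have hnhds : ∀ᶠ y in 𝓝 x, |f y| < |f x| + |l| + 1 := by
    rw [← nhdsLT_sup_nhdsGE]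
    exact eventually_sup.mpr ⟨hleft, hright⟩
  exact ⟨_, mem_nhdsWithin_of_mem_nhds hnhds, _, fun y hy => le_of_lt hy⟩

lemma abs_sub_le_modCont {ζ : ℝ → ℝ} {u δ M : ℝ} (hM : ∀ x ∈ Icc 0 u, |ζ x| ≤ M)
    {s t : ℝ} (hs : s ∈ Icc 0 u) (ht : t ∈ Icc 0 u) (hst : |s - t| ≤ δ) :
    |ζ s - ζ t| ≤ modCont ζ u δ := by
  refine le_csSup ⟨M + M, ?_⟩ ⟨s, t, hs, ht, hst, rfl⟩
  rintro _ ⟨x, y, hx, hy, -, rfl⟩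
  exact (abs_sub _ _).trans (add_le_add (hM x hx) (hM y hy))

lemma mul_le_intervalIntegral_of_le {f : ℝ → ℝ} {a b c : ℝ} (hab : a ≤ b)
    (hf : IntervalIntegrable f volume a b) (hc : ∀ x ∈ Icc a b, c ≤ f x) :
    (b - a) * c ≤ ∫ x in a..b, f x := by
  simpa [mul_comm] using intervalIntegral.integral_mono_on hab intervalIntegrable_const hf hc

section

variable {u ε W : ℝ} {ζ η β : ℝ → ℝ}

lemma neg_le_of_window_average (hε : 0 < ε)
    (hw : ∀ x ∈ Icc 0 u, ∀ y ∈ Icc 0 u, |x - y| ≤ ε → |ζ x - ζ y| ≤ W)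
    (hη : MonotoneOn η (Icc 0 u)) (hβint : IntervalIntegrable β volume 0 u)
    (hβbd : ∀ t ∈ Icc 0 u, -(ε ^ 2) ≤ ∫ x in 0..t, β x ∧ ∫ x in 0..t, β x ≤ ε ^ 2)
    (hα : ∀ t ∈ Icc 0 u, 0 ≤ ζ t + η t + β t) {s : ℝ} (hεs : ε ≤ s) (hsu : s ≤ u) :
    -ζ s ≤ η s + W + 2 * ε := by
  have hs : s ∈ Icc 0 u := ⟨hε.le.trans hεs, hsu⟩
  have hwindow : Icc (s - ε) s ⊆ Icc 0 u := Icc_subset_Icc (by linarith) hsu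
  have hpoint : ∀ x ∈ Icc (s - ε) s, -(ζ s + W + η s) ≤ β x := by
    intro x hx
    have hxs : |x - s| ≤ ε := abs_le.mpr ⟨by linarith [hx.1], by linarith [hx.2]⟩
    have hζx := (abs_le.mp (hw x (hwindow hx) s hs hxs)).2
    linarith [hα x (hwindow hx), hη (hwindow hx) hs hx.2]
  have hint : ∀ a ∈ Icc 0 u, ∀ b ∈ Icc 0 u, IntervalIntegrable β volume a b :=
    fun a ha b hb => hβint.mono_set
      (uIcc_subset_uIcc (mem_uIcc_of_le ha.1 ha.2) (mem_uIcc_of_le hb.1 hb.2))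
  have h0 : (0 : ℝ) ∈ Icc 0 u := ⟨le_rfl, hs.1.trans hsu⟩
  have hsε : s - ε ∈ Icc 0 u := hwindow ⟨le_rfl, by linarith⟩
  have hlow : (s - (s - ε)) * -(ζ s + W + η s) ≤ ∫ x in (s - ε)..s, β x :=
    mul_le_intervalIntegral_of_le (by linarith) (hint _ hsε _ hs) hpoint
  rw [← intervalIntegral.integral_interval_sub_left (hint 0 h0 s hs) (hint 0 h0 _ hsε)] at hlow
  have hsq : ε * -(ζ s + W + η s) ≤ ε * (2 * ε) := by
    linarith [(hβbd s hs).2, (hβbd _ hsε).1]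
  linarith [le_of_mul_le_mul_left hsq hε]

lemma neg_le_of_mem_Icc (hε : 0 < ε)
    (hw : ∀ x ∈ Icc 0 u, ∀ y ∈ Icc 0 u, |x - y| ≤ ε → |ζ x - ζ y| ≤ W) (hζ0 : 0 ≤ ζ 0)
    (hη : MonotoneOn η (Icc 0 u)) (hη0 : 0 ≤ η 0) (hβint : IntervalIntegrable β volume 0 u)
    (hβbd : ∀ t ∈ Icc 0 u, -(ε ^ 2) ≤ ∫ x in 0..t, β x ∧ ∫ x in 0..t, β x ≤ ε ^ 2)
    (hα : ∀ t ∈ Icc 0 u, 0 ≤ ζ t + η t + β t) {s : ℝ} (hs : s ∈ Icc 0 u) :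
    -ζ s ≤ η s + W + 2 * ε := by
  rcases le_or_gt ε s with hεs | hsε
  · exact neg_le_of_window_average hε hw hη hβint hβbd hα hεs hs.2
  · have h0 : (0 : ℝ) ∈ Icc 0 u := ⟨le_rfl, hs.1.trans hs.2⟩
    have hdist : |0 - s| ≤ ε := by rw [zero_sub, abs_neg, abs_of_nonneg hs.1]; exact hsε.le
    have hζs := (abs_le.mp (hw 0 h0 s hs hdist)).2
    linarith [hη h0 hs hs.1]

end

theorem stmt0_general (u ε : ℝ) (hε : 0 < ε)
    (ζ η β : ℝ → ℝ) (hζ : RCLL ζ) (hζ0 : 0 ≤ ζ 0)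
    (hηmono : MonotoneOn η (Set.Icc 0 u)) (hη0 : 0 ≤ η 0)
    (hβint : IntervalIntegrable β MeasureTheory.volume 0 u)
    (hβbd : ∀ t ∈ Set.Icc (0:ℝ) u,
      (-(ε ^ 2) ≤ ∫ s in (0:ℝ)..t, β s) ∧ (∫ s in (0:ℝ)..t, β s) ≤ ε ^ 2)
    (hα : ∀ t ∈ Set.Icc (0:ℝ) u, 0 ≤ ζ t + η t + β t) :
    ∀ t ∈ Set.Icc (0:ℝ) u,
      ζ t + η t + β t ≥ skorohod ζ t + β t - modCont ζ u ε - 3 * ε := by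
  rintro t ⟨ht0, htu⟩
  obtain ⟨M, hM⟩ := hζ.exists_abs_le_on_Icc 0 u
  have hw : ∀ x ∈ Icc 0 u, ∀ y ∈ Icc 0 u, |x - y| ≤ ε → |ζ x - ζ y| ≤ modCont ζ u ε :=
    fun x hx y hy => abs_sub_le_modCont hM hx hy
  have h0 : (0 : ℝ) ∈ Icc 0 u := ⟨le_rfl, ht0.trans htu⟩
  have hW : 0 ≤ modCont ζ u ε := by simpa using hw 0 h0 0 h0 (by simpa using hε.le)
  have hηt : 0 ≤ η t := hη0.trans (hηmono h0 ⟨ht0, htu⟩ ht0)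
  have hsup : sSup ((fun s => max (-(ζ s)) 0) '' Icc 0 t) ≤ η t + modCont ζ u ε + 2 * ε := by
    refine Real.sSup_le ?_ (by linarith)
    rintro _ ⟨s, hs, rfl⟩
    have hsu : s ∈ Icc 0 u := ⟨hs.1, hs.2.trans htu⟩
    refine max_le ?_ (by linarith)
    linarith [neg_le_of_mem_Icc hε hw hζ0 hηmono hη0 hβint hβbd hα hsu,
      hηmono hsu ⟨ht0, htu⟩ hs.2]
  rw [skorohod]
  linarith

theorem stmt0 (u ε : ℝ) (hu : 0 < u) (hε : 0 < ε) (hεu : ε < u)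
    (ζ η β : ℝ → ℝ) (hζ : RCLL ζ) (hζ0 : 0 ≤ ζ 0)
    (hη : RCLL η) (hηmono : MonotoneOn η (Set.Icc 0 u)) (hη0 : 0 ≤ η 0)
    (hβ : RCLL β) (hβint : IntervalIntegrable β MeasureTheory.volume 0 u)
    (hβbd : ∀ t ∈ Set.Icc (0:ℝ) u,
      (-(ε ^ 2) ≤ ∫ s in (0:ℝ)..t, β s) ∧ (∫ s in (0:ℝ)..t, β s) ≤ ε ^ 2)
    (hα : ∀ t ∈ Set.Icc (0:ℝ) u, 0 ≤ ζ t + η t + β t) :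
    ∀ t ∈ Set.Icc (0:ℝ) u,
      ζ t + η t + β t ≥ skorohod ζ t + β t - modCont ζ u ε - 3 * ε :=
  stmt0_general u ε hε ζ η β hζ hζ0 hηmono hη0 hβint hβbd hα
end

section
/- Let C₁ : ℝ → ℝ₊ be nondecreasing and convex. Let T > 0, 0 < Δ < T/2, r > 0, ε > 0, and let p, h : [0,T] → ℝ be (integrable) functions such that |∫₀ᵗ h(s) ds| ≤ ε for all t ∈ [0,T] and |p(t)| + |h(t)| ≤ r for all t ∈ [0,T]. Then ∫₀ᵀ C₁(p(t)+h(t)) dt ≥ ∫₀ᵀ C₁(p(t)) dt − γ₁T − γ₂T − γ₃, where γ₁ = w̄_{[−r,r]}(C₁, 2ε/Δ), γ₂ = w̄_{[−r,r]}(C₁, w̄_T(p,Δ)), γ₃ = 2C₁(r)Δ. -/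
/-!
Cut `[0, T]` into `⌊T / Δ⌋` blocks of length `Δ` and a remainder shorter than `Δ`; since
`0 ≤ C₁ ≤ C₁(r)` on `[-r, r]`, the remainder costs at most `C₁(r) Δ`. On a block, let `P` and `M`
be the averages of `p` and `p + h`. The bound on the primitive of `h` gives `|M - P| ≤ 2ε/Δ`, and
`p` stays within `w̄_T(p, Δ)` of its average, so pointwise `C₁ ∘ p ≤ C₁(P) + γ₂ ≤ C₁(M) + γ₁ + γ₂`,
while Jensen's inequality gives `C₁(M) ≤ ⨍ C₁ ∘ (p + h)`.
-/

/-- Modulus of continuity of `f` over `[a,b]` at scale `δ`. -/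
noncomputable def modContOn (f : ℝ → ℝ) (a b δ : ℝ) : ℝ :=
  sSup {y | ∃ s t, s ∈ Set.Icc a b ∧ t ∈ Set.Icc a b ∧ |s - t| ≤ δ ∧ y = |f s - f t|}

open MeasureTheory Set Filter

section ModCont

variable {f : ℝ → ℝ} {a b δ B : ℝ}

lemma abs_sub_le_modContOn (hB : ∀ x ∈ Icc a b, ∀ y ∈ Icc a b, |f x - f y| ≤ B) {x y : ℝ}
    (hx : x ∈ Icc a b) (hy : y ∈ Icc a b) (hxy : |x - y| ≤ δ) :
    |f x - f y| ≤ modContOn f a b δ :=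
  le_csSup ⟨B, by rintro _ ⟨u, v, hu, hv, -, rfl⟩; exact hB u hu v hv⟩ ⟨x, y, hx, hy, hxy, rfl⟩

lemma modContOn_nonneg (hB : ∀ x ∈ Icc a b, ∀ y ∈ Icc a b, |f x - f y| ≤ B) (hab : a ≤ b)
    (hδ : 0 ≤ δ) : 0 ≤ modContOn f a b δ :=
  (abs_nonneg _).trans <|
    abs_sub_le_modContOn hB (left_mem_Icc.2 hab) (left_mem_Icc.2 hab) (by simpa using hδ)

end ModCont

lemma Monotone.abs_sub_le_of_nonneg {f : ℝ → ℝ} (hf : Monotone f) (h0 : ∀ x, 0 ≤ f x)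
    {x y b : ℝ} (hx : x ≤ b) (hy : y ≤ b) : |f x - f y| ≤ f b :=
  abs_sub_le_iff.2 ⟨by linarith [hf hx, h0 y], by linarith [hf hy, h0 x]⟩

lemma abs_sub_le_two_mul_of_abs_le {α : Type*} {f : α → ℝ} {s : Set α} {r : ℝ}
    (hf : ∀ x ∈ s, |f x| ≤ r) : ∀ x ∈ s, ∀ y ∈ s, |f x - f y| ≤ 2 * r :=
  fun x hx y hy => (abs_sub _ _).trans (by linarith [hf x hx, hf y hy])

theorem setAverage_comp_le_setAverage_comp_add_modContOn {α : Type*} [MeasurableSpace α]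
    {μ : Measure α} {s : Set α} (hs : MeasurableSet s) (hμ0 : μ s ≠ 0) (hμ : μ s ≠ ⊤)
    {C : ℝ → ℝ} (hC : ConvexOn ℝ univ C) {a b B δ₁ δ₂ : ℝ}
    (hCB : ∀ x ∈ Icc a b, ∀ y ∈ Icc a b, |C x - C y| ≤ B) {p h : α → ℝ}
    (hp : IntegrableOn p s μ) (hh : IntegrableOn h s μ)
    (hCp : IntegrableOn (fun x => C (p x)) s μ) (hCph : IntegrableOn (fun x => C (p x + h x)) s μ)
    (hps : ∀ x ∈ s, p x ∈ Icc a b) (hphs : ∀ x ∈ s, p x + h x ∈ Icc a b)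
    (havg : |⨍ x in s, h x ∂μ| ≤ δ₁) (hosc : ∀ x ∈ s, ∀ y ∈ s, |p x - p y| ≤ δ₂) :
    ⨍ x in s, C (p x) ∂μ ≤
      ⨍ x in s, C (p x + h x) ∂μ + modContOn C a b δ₁ + modContOn C a b δ₂ := by
  have average_mem : ∀ {f : α → ℝ} {K : Set ℝ}, Convex ℝ K → IsClosed K →
      IntegrableOn f s μ → (∀ x ∈ s, f x ∈ K) → ⨍ x in s, f x ∂μ ∈ K :=
    fun hK hKc hf hfK => hK.set_average_mem hKc hμ0 hμ (ae_restrict_of_forall_mem hs hfK) hf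
  set P := ⨍ x in s, p x ∂μ
  set M := ⨍ x in s, (p x + h x) ∂μ
  have hP : P ∈ Icc a b := average_mem (convex_Icc a b) isClosed_Icc hp hps
  have hM : M ∈ Icc a b := average_mem (convex_Icc a b) isClosed_Icc (hp.add hh) hphs
  have hMP : M = P + ⨍ x in s, h x ∂μ := by
    simp only [M, P, setAverage_eq, integral_add hp hh, smul_add]
  have jensen : C M ≤ ⨍ x in s, C (p x + h x) ∂μ :=
    hC.map_set_average_le (hC.continuousOn isOpen_univ) isClosed_univ hμ0 hμ
      (Eventually.of_forall fun _ => mem_univ _) (hp.add hh) hCph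
  have hCPM : C P - C M ≤ modContOn C a b δ₁ :=
    (le_abs_self _).trans <| abs_sub_le_modContOn hCB hP hM <| by
      rwa [hMP, sub_add_cancel_left, abs_neg]
  have hCpP : ∀ x ∈ s, C (p x) ∈ Iic (C P + modContOn C a b δ₂) := by
    intro x hx
    have hxP : |p x - P| ≤ δ₂ := mem_Icc_iff_abs_le.2 <|
      average_mem (convex_Icc _ _) isClosed_Icc hp fun y hy => mem_Icc_iff_abs_le.1 (hosc x hx y hy)
    exact sub_le_iff_le_add'.1 <|
      (le_abs_self _).trans (abs_sub_le_modContOn hCB (hps x hx) hP hxP)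
  have := average_mem (convex_Iic _) isClosed_Iic hCp hCpP
  simp only [mem_Iic] at this
  linarith

lemma intervalIntegral_comp_le_add_modContOn {C : ℝ → ℝ} (hC : ConvexOn ℝ univ C) {r B : ℝ}
    (hCB : ∀ x ∈ Icc (-r) r, ∀ y ∈ Icc (-r) r, |C x - C y| ≤ B) {T Δ ε : ℝ} (hΔ : 0 < Δ)
    {p h : ℝ → ℝ} (hpint : IntervalIntegrable p volume 0 T)
    (hhint : IntervalIntegrable h volume 0 T)
    (hCphint : IntervalIntegrable (fun t => C (p t + h t)) volume 0 T)
    (hCpint : IntervalIntegrable (fun t => C (p t)) volume 0 T)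
    (hhbd : ∀ t ∈ Icc (0:ℝ) T, |∫ s in (0:ℝ)..t, h s| ≤ ε)
    (hp : ∀ t ∈ Icc (0:ℝ) T, |p t| ≤ r) (hph : ∀ t ∈ Icc (0:ℝ) T, |p t + h t| ≤ r)
    {u : ℝ} (hu : 0 ≤ u) (huT : u + Δ ≤ T) :
    ∫ t in u..u + Δ, C (p t) ≤
      (∫ t in u..u + Δ, C (p t + h t))
        + (modContOn C (-r) r (2 * ε / Δ) + modContOn C (-r) r (modContOn p 0 T Δ)) * Δ := by
  have hIoc : Ioc u (u + Δ) ⊆ Ioc 0 T := Ioc_subset_Ioc hu huT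
  have hIcc : Ioc u (u + Δ) ⊆ Icc 0 T := hIoc.trans Ioc_subset_Icc_self
  have hvol : volume.real (Ioc u (u + Δ)) = Δ := by simp [hΔ.le]
  have hh_sub : ∀ v ∈ Icc (0:ℝ) T, IntervalIntegrable h volume 0 v := fun v hv =>
    hhint.mono_set (uIcc_subset_uIcc left_mem_uIcc (Icc_subset_uIcc hv))
  have havg : |⨍ t in Ioc u (u + Δ), h t| ≤ 2 * ε / Δ := by
    have hu' : u ∈ Icc 0 T := ⟨hu, by linarith⟩
    have huΔ : u + Δ ∈ Icc 0 T := ⟨by linarith, huT⟩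
    rw [setAverage_eq, hvol, smul_eq_mul, ← intervalIntegral.integral_of_le (by linarith),
      ← intervalIntegral.integral_interval_sub_left (hh_sub _ huΔ) (hh_sub _ hu'), abs_mul,
      abs_inv, abs_of_pos hΔ, inv_mul_eq_div]
    gcongr
    linarith [abs_sub (∫ s in (0:ℝ)..u + Δ, h s) (∫ s in (0:ℝ)..u, h s), hhbd _ hu', hhbd _ huΔ]
  have hosc : ∀ x ∈ Ioc u (u + Δ), ∀ y ∈ Ioc u (u + Δ), |p x - p y| ≤ modContOn p 0 T Δ :=
    fun x hx y hy => abs_sub_le_modContOn (abs_sub_le_two_mul_of_abs_le hp) (hIcc hx) (hIcc hy)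
      (abs_sub_le_iff.2 ⟨by linarith [hx.2, hy.1], by linarith [hx.1, hy.2]⟩)
  have key := setAverage_comp_le_setAverage_comp_add_modContOn measurableSet_Ioc
    (by simp [hΔ]) (by simp) hC hCB (hpint.1.mono_set hIoc) (hhint.1.mono_set hIoc)
    (hCpint.1.mono_set hIoc) (hCphint.1.mono_set hIoc) (fun x hx => abs_le.1 (hp x (hIcc hx)))
    (fun x hx => abs_le.1 (hph x (hIcc hx))) havg hosc
  rw [intervalIntegral.integral_of_le (by linarith), intervalIntegral.integral_of_le (by linarith),
    ← measure_smul_setAverage _ (by simp), ← measure_smul_setAverage _ (by simp), hvol,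
    smul_eq_mul, smul_eq_mul]
  linarith [mul_le_mul_of_nonneg_left key hΔ.le]

lemma integral_le_integral_add_of_uniform_blocks {f g : ℝ → ℝ} {Δ c : ℝ} {N : ℕ}
    (hf : ∀ k < N, IntervalIntegrable f volume (k * Δ) (k * Δ + Δ))
    (hg : ∀ k < N, IntervalIntegrable g volume (k * Δ) (k * Δ + Δ))
    (hle : ∀ k < N, ∫ x in k * Δ..k * Δ + Δ, f x ≤ (∫ x in k * Δ..k * Δ + Δ, g x) + c) :
    ∫ x in 0..N * Δ, f x ≤ (∫ x in 0..N * Δ, g x) + N * c := by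
  have hstep (k : ℕ) : ((k + 1 : ℕ) : ℝ) * Δ = k * Δ + Δ := by push_cast; ring
  have hsum {φ : ℝ → ℝ} (hφ : ∀ k < N, IntervalIntegrable φ volume (k * Δ) (k * Δ + Δ)) :
      ∑ k ∈ Finset.range N, ∫ x in k * Δ..k * Δ + Δ, φ x = ∫ x in 0..N * Δ, φ x := by
    simpa only [hstep, Nat.cast_zero, zero_mul] using
      intervalIntegral.sum_integral_adjacent_intervals (a := fun k : ℕ => k * Δ)
        fun k hk => hstep k ▸ hφ k hk
  rw [← hsum hf, ← hsum hg]
  calc _ ≤ ∑ k ∈ Finset.range N, ((∫ x in k * Δ..k * Δ + Δ, g x) + c) :=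
        Finset.sum_le_sum fun k hk => hle k (Finset.mem_range.1 hk)
    _ = _ := by rw [Finset.sum_add_distrib, Finset.sum_const, Finset.card_range, nsmul_eq_mul]

lemma integral_le_integral_add_of_forall_block {f g : ℝ → ℝ} {T Δ c d : ℝ} (hT : 0 ≤ T)
    (hΔ : 0 < Δ) (hc : 0 ≤ c) (hf : IntervalIntegrable f volume 0 T)
    (hg : IntervalIntegrable g volume 0 T)
    (hblock : ∀ u, 0 ≤ u → u + Δ ≤ T → ∫ x in u..u + Δ, f x ≤ (∫ x in u..u + Δ, g x) + c * Δ)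
    (htail : ∀ u, 0 ≤ u → u ≤ T → T < u + Δ → ∫ x in u..T, f x ≤ (∫ x in u..T, g x) + d) :
    ∫ x in 0..T, f x ≤ (∫ x in 0..T, g x) + c * T + d := by
  set N := ⌊T / Δ⌋₊
  have hNT : N * Δ ≤ T := (le_div_iff₀ hΔ).1 (Nat.floor_le (by positivity))
  have hTN : T < N * Δ + Δ := by linarith [(div_lt_iff₀ hΔ).1 (Nat.lt_floor_add_one (T / Δ))]
  have hsub {φ : ℝ → ℝ} {u v : ℝ} (hu : u ∈ Icc 0 T) (hv : v ∈ Icc 0 T)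
      (hφ : IntervalIntegrable φ volume 0 T) : IntervalIntegrable φ volume u v :=
    hφ.mono_set (uIcc_subset_uIcc (Icc_subset_uIcc hu) (Icc_subset_uIcc hv))
  have hk : ∀ k < N, 0 ≤ k * Δ ∧ k * Δ + Δ ≤ T := fun k hk => by
    have : ((k + 1 : ℕ) : ℝ) * Δ ≤ N * Δ := by gcongr; exact_mod_cast hk
    push_cast at this
    exact ⟨by positivity, by linarith⟩
  have hk_int {φ : ℝ → ℝ} (hφ : IntervalIntegrable φ volume 0 T) (k : ℕ) (hk' : k < N) :
      IntervalIntegrable φ volume (k * Δ) (k * Δ + Δ) :=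
    hsub ⟨(hk k hk').1, by linarith [hk k hk']⟩ ⟨by linarith [hk k hk'], (hk k hk').2⟩ hφ
  have hhead := integral_le_integral_add_of_uniform_blocks (hk_int hf) (hk_int hg)
    fun k hk' => hblock _ (hk k hk').1 (hk k hk').2
  have hNmem : (N : ℝ) * Δ ∈ Icc 0 T := ⟨by positivity, hNT⟩
  have hrest := htail _ hNmem.1 hNT hTN
  rw [← intervalIntegral.integral_add_adjacent_intervals (hsub ⟨le_rfl, hT⟩ hNmem hf)
      (hsub hNmem ⟨hT, le_rfl⟩ hf),
    ← intervalIntegral.integral_add_adjacent_intervals (hsub ⟨le_rfl, hT⟩ hNmem hg)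
      (hsub hNmem ⟨hT, le_rfl⟩ hg)]
  linarith [mul_le_mul_of_nonneg_left hNT hc]

theorem stmt1_general (C₁ : ℝ → ℝ) (hC₁pos : ∀ x, 0 ≤ C₁ x) (hC₁mono : Monotone C₁)
    (hC₁conv : ConvexOn ℝ Set.univ C₁)
    (T Δ r ε : ℝ) (hT : 0 < T) (hΔ : 0 < Δ) (hr : 0 < r) (hε : 0 < ε)
    (p h : ℝ → ℝ)
    (hpint : IntervalIntegrable p MeasureTheory.volume 0 T)
    (hhint : IntervalIntegrable h MeasureTheory.volume 0 T)
    (hCphint : IntervalIntegrable (fun t => C₁ (p t + h t)) MeasureTheory.volume 0 T)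
    (hCpint : IntervalIntegrable (fun t => C₁ (p t)) MeasureTheory.volume 0 T)
    (hhbd : ∀ t ∈ Set.Icc (0:ℝ) T, |∫ s in (0:ℝ)..t, h s| ≤ ε)
    (hbd : ∀ t ∈ Set.Icc (0:ℝ) T, |p t| + |h t| ≤ r) :
    (∫ t in (0:ℝ)..T, C₁ (p t + h t)) ≥
      (∫ t in (0:ℝ)..T, C₁ (p t))
        - modContOn C₁ (-r) r (2 * ε / Δ) * T
        - modContOn C₁ (-r) r (modContOn p 0 T Δ) * T
        - 2 * C₁ r * Δ := by
  have hp : ∀ t ∈ Icc (0:ℝ) T, |p t| ≤ r := fun t ht =>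
    (le_add_of_nonneg_right (abs_nonneg _)).trans (hbd t ht)
  have hph : ∀ t ∈ Icc (0:ℝ) T, |p t + h t| ≤ r := fun t ht => (abs_add_le _ _).trans (hbd t ht)
  have hCB : ∀ x ∈ Icc (-r) r, ∀ y ∈ Icc (-r) r, |C₁ x - C₁ y| ≤ C₁ r :=
    fun x hx y hy => hC₁mono.abs_sub_le_of_nonneg hC₁pos hx.2 hy.2
  have hγ₁ : 0 ≤ modContOn C₁ (-r) r (2 * ε / Δ) :=
    modContOn_nonneg hCB (by linarith) (by positivity)
  have hγ₂ : 0 ≤ modContOn C₁ (-r) r (modContOn p 0 T Δ) := modContOn_nonneg hCB (by linarith)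
    (modContOn_nonneg (abs_sub_le_two_mul_of_abs_le hp) hT.le hΔ.le)
  have htail : ∀ u, 0 ≤ u → u ≤ T → T < u + Δ →
      ∫ t in u..T, C₁ (p t) ≤ (∫ t in u..T, C₁ (p t + h t)) + C₁ r * Δ := by
    intro u hu huT hTu
    have hle := intervalIntegral.integral_mono_on huT
      (hCpint.mono_set (uIcc_subset_uIcc (Icc_subset_uIcc ⟨hu, huT⟩) right_mem_uIcc))
      intervalIntegrable_const fun t ht =>
        hC₁mono ((le_abs_self _).trans (hp t ⟨hu.trans ht.1, ht.2⟩))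
    rw [intervalIntegral.integral_const, smul_eq_mul] at hle
    have : 0 ≤ ∫ t in u..T, C₁ (p t + h t) :=
      intervalIntegral.integral_nonneg huT fun t _ => hC₁pos _
    linarith [mul_le_mul_of_nonneg_right (show T - u ≤ Δ by linarith) (hC₁pos r)]
  have := integral_le_integral_add_of_forall_block hT.le hΔ (add_nonneg hγ₁ hγ₂) hCpint hCphint
    (fun u hu huT => intervalIntegral_comp_le_add_modContOn hC₁conv hCB hΔ hpint hhint hCphint
      hCpint hhbd hp hph hu huT) htail
  linarith [mul_nonneg (hC₁pos r) hΔ.le]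

theorem stmt1 (C₁ : ℝ → ℝ) (hC₁pos : ∀ x, 0 ≤ C₁ x) (hC₁mono : Monotone C₁)
    (hC₁conv : ConvexOn ℝ Set.univ C₁)
    (T Δ r ε : ℝ) (hT : 0 < T) (hΔ : 0 < Δ) (hΔT : Δ < T / 2) (hr : 0 < r) (hε : 0 < ε)
    (p h : ℝ → ℝ)
    (hpint : IntervalIntegrable p MeasureTheory.volume 0 T)
    (hhint : IntervalIntegrable h MeasureTheory.volume 0 T)
    (hCphint : IntervalIntegrable (fun t => C₁ (p t + h t)) MeasureTheory.volume 0 T)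
    (hCpint : IntervalIntegrable (fun t => C₁ (p t)) MeasureTheory.volume 0 T)
    (hhbd : ∀ t ∈ Set.Icc (0:ℝ) T, |∫ s in (0:ℝ)..t, h s| ≤ ε)
    (hbd : ∀ t ∈ Set.Icc (0:ℝ) T, |p t| + |h t| ≤ r) :
    (∫ t in (0:ℝ)..T, C₁ (p t + h t)) ≥
      (∫ t in (0:ℝ)..T, C₁ (p t))
        - modContOn C₁ (-r) r (2 * ε / Δ) * T
        - modContOn C₁ (-r) r (modContOn p 0 T Δ) * T
        - 2 * C₁ r * Δ :=
  stmt1_general C₁ hC₁pos hC₁mono hC₁conv T Δ r ε hT hΔ hr hε p h hpint hhint hCphint hCpint hhbd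
    hbd
end

section
/- Under the heavy traffic assumption (unique optimal allocation ξ* with Σ_i ξ*_{ij} = 1 for all j) and maximality of λ = μ̄(ξ*) in ℳ, there exist constants c₁ > 0 such that: for every matrix x supported on edges with x_{ij} ≤ 0 for all nonbasic (i,j) and Σ_i x_{ij} ≥ 0 for all j, one has max_i μ̄(x)_i ≥ c₁ ‖x‖, where ‖x‖² = Σ_{ij} x_{ij}². -/
open Finset

/-- Membership in the allocation polytope `𝒳`. -/
def inX {I J : Type*} [Fintype I] (edge : I → J → Prop) (ξ : I → J → ℝ) : Prop :=
  (∀ i j, 0 ≤ ξ i j) ∧ (∀ i j, ¬ edge i j → ξ i j = 0) ∧ (∀ j, ∑ i, ξ i j ≤ 1)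

/-- `μ̄(ξ)_i = Σ_j μ̄_{ij} ξ_{ij}`. -/
def muOf {I J : Type*} [Fintype J] (mubar : I → J → ℝ) (ξ : I → J → ℝ) (i : I) : ℝ :=
  ∑ j, mubar i j * ξ i j

lemma pos_key {I J : Type*} [Fintype I] [Fintype J] [Nonempty I]
    (edge : I → J → Prop) (mubar : I → J → ℝ)
    (lam : I → ℝ) (ξstar : I → J → ℝ)
    (hξstar : inX edge ξstar)
    (hlam : ∀ i, muOf mubar ξstar i = lam i)
    (huniq : ∀ ξ : I → J → ℝ, inX edge ξ → (∀ i, muOf mubar ξ i = lam i) → ξ = ξstar)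
    (hmax : ∀ ξ : I → J → ℝ, inX edge ξ → (∀ i, lam i ≤ muOf mubar ξ i) →
      ∀ i, muOf mubar ξ i = lam i)
    (x : I → J → ℝ)
    (hxe : ∀ i j, ¬ edge i j → x i j = 0)
    (hxs : ∀ i j, ξstar i j = 0 → x i j ≤ 0)
    (hxc : ∀ j, 0 ≤ ∑ i, x i j)
    (hx : x ≠ 0) : ∃ i, 0 < muOf mubar x i := by
  by_contra hcon
  push_neg at hcon
  rcases isEmpty_or_nonempty J with hJ | hJ
  · exact hx (funext fun i => funext fun j => (hJ.false j).elim)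
  have hne : (univ : Finset (I × J)).Nonempty := univ_nonempty
  set f : I × J → ℝ := fun p => if 0 < x p.1 p.2 then ξstar p.1 p.2 / x p.1 p.2 else 1 with hf
  set t : ℝ := (univ : Finset (I × J)).inf' hne f with ht
  have hxstpos : ∀ i j, 0 < x i j → 0 < ξstar i j := by
    intro i j h
    rcases lt_or_eq_of_le (hξstar.1 i j) with h' | h'
    · exact h'
    · exact absurd h (not_lt.2 (hxs i j h'.symm))
  have htpos : 0 < t := by
    rw [ht, Finset.lt_inf'_iff]
    intro p _
    rw [hf]
    dsimp only
    split_ifs with h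
    · exact div_pos (hxstpos p.1 p.2 h) h
    · exact one_pos
  have hnonneg : ∀ i j, 0 ≤ ξstar i j - t * x i j := by
    intro i j
    rcases le_or_gt (x i j) 0 with h | h
    · have : t * x i j ≤ 0 := mul_nonpos_of_nonneg_of_nonpos htpos.le h
      linarith [hξstar.1 i j]
    · have hle : t ≤ ξstar i j / x i j := by
        have h2 := Finset.inf'_le f (Finset.mem_univ (i, j))
        simp only [hf, if_pos h] at h2
        exact h2
      have := (le_div_iff₀ h).1 hle
      linarith
  set ξ : I → J → ℝ := fun i j => ξstar i j - t * x i j with hξ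
  have hξX : inX edge ξ := by
    refine ⟨hnonneg, fun i j he => ?_, fun j => ?_⟩
    · simp [hξ, hξstar.2.1 i j he, hxe i j he]
    · have : ∑ i, ξ i j = (∑ i, ξstar i j) - t * ∑ i, x i j := by
        simp [hξ, Finset.sum_sub_distrib, Finset.mul_sum]
      rw [this]
      have : 0 ≤ t * ∑ i, x i j := mul_nonneg htpos.le (hxc j)
      linarith [hξstar.2.2 j]
  have hmu : ∀ i, muOf mubar ξ i = lam i - t * muOf mubar x i := by
    intro i
    simp only [muOf, hξ, mul_sub, Finset.sum_sub_distrib, ← hlam i]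
    congr 1
    rw [Finset.mul_sum]
    exact Finset.sum_congr rfl fun j _ => by ring
  have hge : ∀ i, lam i ≤ muOf mubar ξ i := by
    intro i
    rw [hmu i]
    have : t * muOf mubar x i ≤ 0 := mul_nonpos_of_nonneg_of_nonpos htpos.le (hcon i)
    linarith
  have heq := huniq ξ hξX (hmax ξ hξX hge)
  apply hx
  funext i j
  have := congrFun (congrFun heq i) j
  simp only [hξ] at this
  have : t * x i j = 0 := by linarith
  have := (mul_eq_zero.1 this).resolve_left (ne_of_gt htpos)
  simpa using this

theorem stmt11 {I J : Type*} [Fintype I] [Fintype J] [Nonempty I]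
    (edge : I → J → Prop) (mubar : I → J → ℝ) (hmubar : ∀ i j, 0 ≤ mubar i j)
    (lam : I → ℝ) (ξstar : I → J → ℝ)
    (hξstar : inX edge ξstar)
    (hlam : ∀ i, muOf mubar ξstar i = lam i)
    (hfull : ∀ j, ∑ i, ξstar i j = 1)
    (huniq : ∀ ξ : I → J → ℝ, inX edge ξ → (∀ i, muOf mubar ξ i = lam i) → ξ = ξstar)
    (hmax : ∀ ξ : I → J → ℝ, inX edge ξ → (∀ i, lam i ≤ muOf mubar ξ i) →
      ∀ i, muOf mubar ξ i = lam i) :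
    ∃ c₁ : ℝ, 0 < c₁ ∧ ∀ x : I → J → ℝ,
      (∀ i j, ¬ edge i j → x i j = 0) →
      (∀ i j, ξstar i j = 0 → x i j ≤ 0) →
      (∀ j, 0 ≤ ∑ i, x i j) →
      ∃ i, c₁ * Real.sqrt (∑ i, ∑ j, (x i j) ^ 2) ≤ muOf mubar x i := by
  classical
  -- sum of squares positivity for nonzero x
  have hsq : ∀ x : I → J → ℝ, x ≠ 0 → 0 < ∑ i, ∑ j, (x i j) ^ 2 := by
    intro x hx
    have : ∃ i j, x i j ≠ 0 := by
      by_contra h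
      push_neg at h
      exact hx (funext fun i => funext fun j => h i j)
    obtain ⟨i, j, hij⟩ := this
    have h1 : 0 < (x i j) ^ 2 := by positivity
    have h2 : (x i j) ^ 2 ≤ ∑ j, (x i j) ^ 2 :=
      Finset.single_le_sum (f := fun k => (x i k) ^ 2) (fun k _ => sq_nonneg _)
        (Finset.mem_univ j)
    have h3 : ∑ j, (x i j) ^ 2 ≤ ∑ i, ∑ j, (x i j) ^ 2 :=
      Finset.single_le_sum (f := fun k => ∑ j, (x k j) ^ 2)
        (fun k _ => Finset.sum_nonneg fun l _ => sq_nonneg _) (Finset.mem_univ i)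
    linarith
  set S : Set (I → J → ℝ) := {x | (∀ i j, ¬ edge i j → x i j = 0) ∧
      (∀ i j, ξstar i j = 0 → x i j ≤ 0) ∧ (∀ j, 0 ≤ ∑ i, x i j) ∧
      (∑ i, ∑ j, (x i j) ^ 2) = 1} with hSdef
  -- normalization into S
  have hnorm : ∀ x : I → J → ℝ,
      (∀ i j, ¬ edge i j → x i j = 0) → (∀ i j, ξstar i j = 0 → x i j ≤ 0) →
      (∀ j, 0 ≤ ∑ i, x i j) → x ≠ 0 →
      (fun i j => (Real.sqrt (∑ i, ∑ j, (x i j) ^ 2))⁻¹ * x i j) ∈ S := by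
    intro x hxe hxs hxc hx
    have hs := hsq x hx
    have hn : 0 < Real.sqrt (∑ i, ∑ j, (x i j) ^ 2) := Real.sqrt_pos.2 hs
    refine ⟨fun i j he => by simp [hxe i j he], fun i j h0 => ?_, fun j => ?_, ?_⟩
    · exact mul_nonpos_of_nonneg_of_nonpos (inv_nonneg.2 hn.le) (hxs i j h0)
    · rw [← Finset.mul_sum]
      exact mul_nonneg (inv_nonneg.2 hn.le) (hxc j)
    · have : ∀ i j, ((Real.sqrt (∑ i, ∑ j, (x i j) ^ 2))⁻¹ * x i j) ^ 2
          = (Real.sqrt (∑ i, ∑ j, (x i j) ^ 2))⁻¹ ^ 2 * (x i j) ^ 2 := fun i j => by ring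
      simp only [this, ← Finset.mul_sum]
      rw [inv_pow, Real.sq_sqrt hs.le]
      exact inv_mul_cancel₀ (ne_of_gt hs)
  by_cases hSne : S.Nonempty
  · -- compactness
    have happ : ∀ (i : I) (j : J), Continuous (fun x : I → J → ℝ => x i j) :=
      fun i j => (continuous_apply j).comp (continuous_apply i)
    have hmucont : ∀ i, Continuous (fun x : I → J → ℝ => muOf mubar x i) := by
      intro i
      unfold muOf
      exact continuous_finset_sum _ fun j _ => (continuous_const.mul (happ i j))
    set F : (I → J → ℝ) → ℝ := fun x => ∑ i, max (muOf mubar x i) 0 with hF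
    have hFcont : Continuous F :=
      continuous_finset_sum _ fun i _ => (hmucont i).max continuous_const
    have hSclosed : IsClosed S := by
      rw [hSdef]
      simp only [Set.setOf_and]
      refine IsClosed.inter ?_ (IsClosed.inter ?_ (IsClosed.inter ?_ ?_))
      · have : {x : I → J → ℝ | ∀ i j, ¬ edge i j → x i j = 0}
            = ⋂ i, ⋂ j, {x : I → J → ℝ | ¬ edge i j → x i j = 0} := by
          ext x; simp [Set.mem_iInter]
        rw [this]
        refine isClosed_iInter fun i => isClosed_iInter fun j => ?_
        by_cases he : edge i j
        · simp only [he, not_true_eq_false, false_implies, Set.setOf_true]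
          exact isClosed_univ
        · have : {x : I → J → ℝ | ¬ edge i j → x i j = 0} = {x | x i j = 0} := by
            ext x; simp [he]
          rw [this]
          exact isClosed_eq (happ i j) continuous_const
      · have : {x : I → J → ℝ | ∀ i j, ξstar i j = 0 → x i j ≤ 0}
            = ⋂ i, ⋂ j, {x : I → J → ℝ | ξstar i j = 0 → x i j ≤ 0} := by
          ext x; simp [Set.mem_iInter]
        rw [this]
        refine isClosed_iInter fun i => isClosed_iInter fun j => ?_
        by_cases he : ξstar i j = 0
        · have : {x : I → J → ℝ | ξstar i j = 0 → x i j ≤ 0} = {x | x i j ≤ 0} := by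
            ext x; simp [he]
          rw [this]
          exact isClosed_le (happ i j) continuous_const
        · have : {x : I → J → ℝ | ξstar i j = 0 → x i j ≤ 0} = Set.univ := by
            ext x; simp [he]
          rw [this]; exact isClosed_univ
      · have : {x : I → J → ℝ | ∀ j, 0 ≤ ∑ i, x i j}
            = ⋂ j, {x : I → J → ℝ | 0 ≤ ∑ i, x i j} := by
          ext x; simp [Set.mem_iInter]
        rw [this]
        exact isClosed_iInter fun j =>
          isClosed_le continuous_const (continuous_finset_sum _ fun i _ => happ i j)
      · exact isClosed_eq (continuous_finset_sum _ fun i _ =>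
          continuous_finset_sum _ fun j _ => (happ i j).pow 2) continuous_const
    have hSsub : S ⊆ Metric.closedBall 0 1 := by
      intro x hx
      rw [Metric.mem_closedBall, dist_zero_right]
      refine (pi_norm_le_iff_of_nonneg zero_le_one).2 fun i => ?_
      refine (pi_norm_le_iff_of_nonneg zero_le_one).2 fun j => ?_
      have h2 : (x i j) ^ 2 ≤ ∑ j, (x i j) ^ 2 :=
        Finset.single_le_sum (f := fun k => (x i k) ^ 2) (fun k _ => sq_nonneg _)
          (Finset.mem_univ j)
      have h3 : ∑ j, (x i j) ^ 2 ≤ ∑ i, ∑ j, (x i j) ^ 2 :=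
        Finset.single_le_sum (f := fun k => ∑ j, (x k j) ^ 2)
          (fun k _ => Finset.sum_nonneg fun l _ => sq_nonneg _) (Finset.mem_univ i)
      have h4 : (x i j) ^ 2 ≤ 1 := by rw [← hx.2.2.2]; linarith
      rw [Real.norm_eq_abs]
      nlinarith [sq_abs (x i j), abs_nonneg (x i j)]
    have hScompact : IsCompact S :=
      (isCompact_closedBall (0 : I → J → ℝ) 1).of_isClosed_subset hSclosed hSsub
    obtain ⟨x₀, hx₀S, hmin⟩ := hScompact.exists_isMinOn hSne hFcont.continuousOn
    have hx₀ne : x₀ ≠ 0 := by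
      intro h
      have := hx₀S.2.2.2
      rw [h] at this
      simp at this
    obtain ⟨i₀, hi₀⟩ := pos_key edge mubar lam ξstar hξstar hlam huniq hmax x₀
      hx₀S.1 hx₀S.2.1 hx₀S.2.2.1 hx₀ne
    have hcpos : 0 < F x₀ := by
      have h1 : max (muOf mubar x₀ i₀) 0 ≤ F x₀ :=
        Finset.single_le_sum (f := fun i => max (muOf mubar x₀ i) 0)
          (fun k _ => le_max_right _ _) (Finset.mem_univ i₀)
      have h2 : 0 < max (muOf mubar x₀ i₀) 0 := lt_max_of_lt_left hi₀
      linarith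
    have hcard : (0 : ℝ) < Fintype.card I := by
      exact_mod_cast Fintype.card_pos
    refine ⟨F x₀ / Fintype.card I, div_pos hcpos hcard, fun x hxe hxs hxc => ?_⟩
    by_cases hx : x = 0
    · refine ⟨Classical.arbitrary I, ?_⟩
      subst hx
      simp [muOf]
    · set n : ℝ := Real.sqrt (∑ i, ∑ j, (x i j) ^ 2) with hn
      have hnpos : 0 < n := Real.sqrt_pos.2 (hsq x hx)
      set y : I → J → ℝ := fun i j => n⁻¹ * x i j with hy
      have hyS : y ∈ S := hnorm x hxe hxs hxc hx
      have hFy : F x₀ ≤ F y := hmin hyS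
      have hexists : ∃ i, F x₀ / Fintype.card I ≤ max (muOf mubar y i) 0 := by
        have hsum : ∑ _i : I, F x₀ / Fintype.card I ≤ ∑ i, max (muOf mubar y i) 0 := by
          rw [Finset.sum_const, Finset.card_univ, nsmul_eq_mul,
            mul_div_cancel₀ _ (ne_of_gt hcard)]
          exact hFy
        obtain ⟨i, _, hi⟩ := Finset.exists_le_of_sum_le Finset.univ_nonempty hsum
        exact ⟨i, hi⟩
      obtain ⟨i, hi⟩ := hexists
      have hipos : 0 < F x₀ / Fintype.card I := div_pos hcpos hcard
      have hmuy : F x₀ / Fintype.card I ≤ muOf mubar y i := by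
        rcases le_max_iff.1 hi with h | h
        · exact h
        · linarith
      have hmuxy : muOf mubar y i = n⁻¹ * muOf mubar x i := by
        simp only [muOf, hy, Finset.mul_sum]
        exact Finset.sum_congr rfl fun j _ => by ring
      rw [hmuxy] at hmuy
      refine ⟨i, ?_⟩
      calc F x₀ / Fintype.card I * n ≤ n⁻¹ * muOf mubar x i * n := by
            exact mul_le_mul_of_nonneg_right hmuy hnpos.le
        _ = muOf mubar x i := by field_simp
  · -- S empty: every admissible x is 0
    refine ⟨1, one_pos, fun x hxe hxs hxc => ?_⟩
    have hx0 : x = 0 := by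
      by_contra hx
      exact hSne ⟨_, hnorm x hxe hxs hxc hx⟩
    subst hx0
    refine ⟨Classical.arbitrary I, ?_⟩
    simp [muOf]
end

section
/- Given the diffusion model data (X₀, W) and processes (X, Y) with RCLL paths satisfying: X_i(t) = X_{0,i} + W_i(t) + Σ_{j: i∼j} μ_{ij} Y_{ij}(t) ≥ 0 for all t and i; I_j := Σ_i Y_{ij} is nondecreasing with I_j(0) ≥ 0 for all j; and Y_{ij} is nonincreasing with Y_{ij} ≤ 0 for nonbasic (i,j); define Z_i = Σ_j μ_{ij} Y_{ij}. Then, assuming θ_i μ̄_{ij} = z*_j > 0 for all basic (i,j) (with μ̄_{ij} = ν_j μ_{ij}) and the normal-cone property θ'μ̄(x) ≥ 0 for x with x_{ij} ≤ 0 on nonbasic activities and Σ_i x_{ij} ≥ 0, the pair (X, Z) satisfies: X_i(t) = X_{0,i} + W_i(t) + Z_i(t) ≥ 0, and θ'Z is nondecreasing with θ'Z(0) ≥ 0. -/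
open Finset

theorem stmt12 {I J : Type*} [Fintype I] [Fintype J]
    (edge basic : I → J → Prop)
    (μ : I → J → ℝ) (hμ : ∀ i j, 0 ≤ μ i j) (hμedge : ∀ i j, 0 < μ i j ↔ edge i j)
    (ν : J → ℝ) (hν : ∀ j, 0 < ν j)
    (θ : I → ℝ) (hθ : ∀ i, 0 < θ i)
    (z : J → ℝ) (hz : ∀ j, 0 < z j)
    (hzbasic : ∀ i j, basic i j → θ i * (ν j * μ i j) = z j)
    (X0 : I → ℝ) (W : I → ℝ → ℝ) (X : I → ℝ → ℝ) (Y : I → J → ℝ → ℝ)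
    (hX : ∀ i, ∀ t : ℝ, 0 ≤ t →
      X i t = X0 i + W i t + ∑ j, μ i j * Y i j t ∧ 0 ≤ X i t)
    (hImono : ∀ j, MonotoneOn (fun t => ∑ i, Y i j t) (Set.Ici 0))
    (hI0 : ∀ j, 0 ≤ ∑ i, Y i j 0)
    (hYnb : ∀ i j, ¬ basic i j →
      AntitoneOn (Y i j) (Set.Ici 0) ∧ ∀ t : ℝ, 0 ≤ t → Y i j t ≤ 0)
    (hnormal : ∀ x : I → J → ℝ, (∀ i j, ¬ basic i j → x i j ≤ 0) →
      (∀ j, 0 ≤ ∑ i, x i j) → 0 ≤ ∑ i, θ i * ∑ j, (ν j * μ i j) * x i j) :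
    ∃ Z : I → ℝ → ℝ,
      (∀ i t, Z i t = ∑ j, μ i j * Y i j t) ∧
      (∀ i, ∀ t : ℝ, 0 ≤ t → X i t = X0 i + W i t + Z i t ∧ 0 ≤ X i t) ∧
      MonotoneOn (fun t => ∑ i, θ i * Z i t) (Set.Ici 0) ∧
      0 ≤ ∑ i, θ i * Z i 0 := by
  refine ⟨fun i t => ∑ j, μ i j * Y i j t, fun _ _ => rfl, fun i t ht => hX i t ht, ?_, ?_⟩
  · intro s hs t ht hst
    have key := hnormal (fun i j => (Y i j t - Y i j s) / ν j)
      (fun i j hb => div_nonpos_of_nonpos_of_nonneg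
        (by linarith [(hYnb i j hb).1 hs ht hst]) (hν j).le)
      (fun j => by
        rw [← Finset.sum_div, Finset.sum_sub_distrib]
        exact div_nonneg (by linarith [hImono j hs ht hst]) (hν j).le)
    have heq : ∀ i, (∑ j, (ν j * μ i j) * ((Y i j t - Y i j s) / ν j))
        = ∑ j, μ i j * Y i j t - ∑ j, μ i j * Y i j s := by
      intro i
      rw [← Finset.sum_sub_distrib]
      refine Finset.sum_congr rfl fun j _ => ?_
      have hj : ν j ≠ 0 := (hν j).ne'
      field_simp
    simp only [heq] at key
    have : ∑ i, θ i * (∑ j, μ i j * Y i j t - ∑ j, μ i j * Y i j s)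
        = ∑ i, θ i * ∑ j, μ i j * Y i j t - ∑ i, θ i * ∑ j, μ i j * Y i j s := by
      rw [← Finset.sum_sub_distrib]; exact Finset.sum_congr rfl fun i _ => by ring
    rw [this] at key
    dsimp only
    linarith
  · have key := hnormal (fun i j => Y i j 0 / ν j)
      (fun i j hb => div_nonpos_of_nonpos_of_nonneg ((hYnb i j hb).2 0 le_rfl) (hν j).le)
      (fun j => by
        rw [← Finset.sum_div]
        exact div_nonneg (hI0 j) (hν j).le)
    have heq : ∀ i, (∑ j, (ν j * μ i j) * (Y i j 0 / ν j)) = ∑ j, μ i j * Y i j 0 := by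
      intro i
      refine Finset.sum_congr rfl fun j _ => ?_
      have hj : ν j ≠ 0 := (hν j).ne'
      field_simp
    simpa [heq] using key
end
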